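/- arXiv:2001.10748 — 3 statements merged into one kernel-verified Lean document; each statement's English description precedes it below -/
import Mathlib

section
/- Let ℓ ≥ 3 be odd, ξ = exp(2πi/ℓ). For μ, μ' ∈ ℂ² with α = (μ₁−ℓ+1, μ₂+ℓ/2), α' = (μ'₁−ℓ+1, μ'₂+ℓ/2), define S'(μ,μ') = ξ^{−4α₂α'₂ − 2(α₂α'₁ + α₁α'₂)} · {ℓα'₁}{α'₂}{α'₂+α'₁}/{α'₁} and d(μ) = {α₁}/(ℓ{ℓα₁}{α₂}{α₁+α₂}). Then d(μ')·S'(μ,μ') = d(μ)·S'(μ',μ), whenever all the quantities are defined (denominators nonzero). -/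
/-- `ξ^x := exp(2πix/ℓ)` -/
noncomputable def qexp (ℓ : ℕ) (x : ℂ) : ℂ :=
  Complex.exp (2 * Real.pi * Complex.I * x / ℓ)

/-- `{x} := ξ^x − ξ^{-x}` -/
noncomputable def br (ℓ : ℕ) (x : ℂ) : ℂ := qexp ℓ x - qexp ℓ (-x)

/-- modified dimension, as a function of the shifted weight `α` -/
noncomputable def dd (ℓ : ℕ) (α₁ α₂ : ℂ) : ℂ :=
  br ℓ α₁ / ((ℓ : ℂ) * br ℓ ((ℓ : ℂ) * α₁) * br ℓ α₂ * br ℓ (α₁ + α₂))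

/-- `S'(μ,μ')`, as a function of the shifted weights `α`, `α'` -/
noncomputable def Sp (ℓ : ℕ) (α₁ α₂ α'₁ α'₂ : ℂ) : ℂ :=
  qexp ℓ (-4 * α₂ * α'₂ - 2 * (α₂ * α'₁ + α₁ * α'₂))
    * (br ℓ ((ℓ : ℂ) * α'₁) * br ℓ α'₂ * br ℓ (α'₂ + α'₁) / br ℓ α'₁)

/-! The brackets of `d(μ')` cancel exactly those of `S'(μ, μ')`, so `d(μ') S'(μ, μ') = ξ^{B(α, α')} / ℓ`
with `B(α, α') = -4 α₂ α'₂ - 2 (α₂ α'₁ + α₁ α'₂)`, and this bilinear form is symmetric. -/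

theorem br_zero_left (x : ℂ) : br 0 x = 0 := by
  simp [br, qexp]

theorem dd_mul_Sp (ℓ : ℕ) (α₁ α₂ α'₁ α'₂ : ℂ) (h₁ : br ℓ α'₁ ≠ 0)
    (hℓ₁ : br ℓ ((ℓ : ℂ) * α'₁) ≠ 0) (h₂ : br ℓ α'₂ ≠ 0) (h₁₂ : br ℓ (α'₁ + α'₂) ≠ 0) :
    dd ℓ α'₁ α'₂ * Sp ℓ α₁ α₂ α'₁ α'₂
      = qexp ℓ (-4 * α₂ * α'₂ - 2 * (α₂ * α'₁ + α₁ * α'₂)) / ℓ := by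
  have hℓ : (ℓ : ℂ) ≠ 0 := by
    rintro hℓ
    exact h₁ (by rw [Nat.cast_eq_zero.mp hℓ, br_zero_left])
  unfold dd Sp
  rw [add_comm α'₂ α'₁]
  field_simp

theorem stmt5_general (ℓ : ℕ) (α₁ α₂ α'₁ α'₂ : ℂ)
    (h1 : br ℓ α₁ ≠ 0) (h2 : br ℓ ((ℓ : ℂ) * α₁) ≠ 0)
    (h3' : br ℓ α₂ ≠ 0) (h4 : br ℓ (α₁ + α₂) ≠ 0)
    (h5 : br ℓ α'₁ ≠ 0) (h6 : br ℓ ((ℓ : ℂ) * α'₁) ≠ 0)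
    (h7 : br ℓ α'₂ ≠ 0) (h8 : br ℓ (α'₁ + α'₂) ≠ 0) :
    dd ℓ α'₁ α'₂ * Sp ℓ α₁ α₂ α'₁ α'₂ = dd ℓ α₁ α₂ * Sp ℓ α'₁ α'₂ α₁ α₂ := by
  rw [dd_mul_Sp ℓ α₁ α₂ α'₁ α'₂ h5 h6 h7 h8, dd_mul_Sp ℓ α'₁ α'₂ α₁ α₂ h1 h2 h3' h4]
  ring_nf

theorem stmt5 (ℓ : ℕ) (h3 : 3 ≤ ℓ) (hodd : Odd ℓ) (μ₁ μ₂ μ'₁ μ'₂ α₁ α₂ α'₁ α'₂ : ℂ)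
    (hα₁ : α₁ = μ₁ - ℓ + 1) (hα₂ : α₂ = μ₂ + (ℓ : ℂ) / 2)
    (hα'₁ : α'₁ = μ'₁ - ℓ + 1) (hα'₂ : α'₂ = μ'₂ + (ℓ : ℂ) / 2)
    (h1 : br ℓ α₁ ≠ 0) (h2 : br ℓ ((ℓ : ℂ) * α₁) ≠ 0)
    (h3' : br ℓ α₂ ≠ 0) (h4 : br ℓ (α₁ + α₂) ≠ 0)
    (h5 : br ℓ α'₁ ≠ 0) (h6 : br ℓ ((ℓ : ℂ) * α'₁) ≠ 0)
    (h7 : br ℓ α'₂ ≠ 0) (h8 : br ℓ (α'₁ + α'₂) ≠ 0) :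
    dd ℓ α'₁ α'₂ * Sp ℓ α₁ α₂ α'₁ α'₂ = dd ℓ α₁ α₂ * Sp ℓ α'₁ α'₂ α₁ α₂ :=
  stmt5_general ℓ α₁ α₂ α'₁ α'₂ h1 h2 h3' h4 h5 h6 h7 h8
end

section
/- Let ℓ ≥ 3 be odd, ξ = exp(2πi/ℓ). Fix ν ∈ ℂ² and integers i = (i₁,i₂), j = (j₁,j₂), s = (s₁,s₂), t = (t₁,t₂) in {0,…,ℓ−1}². Define R(s) = ξ^{−4(ν₂+s₂)(i₂−j₂) − 2((ν₂+s₂)(i₁−j₁) + (ν₁+s₁)(i₂−j₂))}. If (i₁,i₂) ≢ (j₁,j₂) mod ℓ, then there exist s, t ∈ {0,…,ℓ−1}² with R(s) ≠ R(t). -/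
lemma qexp_add (ℓ : ℕ) (a b : ℂ) : qexp ℓ (a + b) = qexp ℓ a * qexp ℓ b := by
  rw [qexp, qexp, qexp, ← Complex.exp_add]
  ring_nf

lemma qexp_ne_zero (ℓ : ℕ) (a : ℂ) : qexp ℓ a ≠ 0 :=
  Complex.exp_ne_zero _

lemma qexp_intCast (ℓ : ℕ) (m : ℤ) :
    qexp ℓ m = Complex.exp (2 * Real.pi * Complex.I / ℓ) ^ m := by
  rw [qexp, ← Complex.exp_int_mul]
  ring_nf

lemma qexp_intCast_eq_one_iff {ℓ : ℕ} (hℓ : ℓ ≠ 0) (m : ℤ) :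
    qexp ℓ m = 1 ↔ (m : ZMod ℓ) = 0 := by
  rw [qexp_intCast, (Complex.isPrimitiveRoot_exp ℓ hℓ).zpow_eq_one_iff_dvd,
    ZMod.intCast_zmod_eq_zero_iff_dvd]

lemma qexp_eq_qexp_iff_of_sub_eq_intCast {ℓ : ℕ} (hℓ : ℓ ≠ 0) {a b : ℂ} {m : ℤ}
    (h : a - b = m) : qexp ℓ a = qexp ℓ b ↔ (m : ZMod ℓ) = 0 := by
  rw [← qexp_intCast_eq_one_iff hℓ, show a = b + m by rw [← h]; ring, qexp_add]
  exact mul_eq_left₀ (qexp_ne_zero ℓ b)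

lemma ZMod.isUnit_two_of_odd {ℓ : ℕ} (hodd : Odd ℓ) : IsUnit (2 : ZMod ℓ) := by
  exact_mod_cast (ZMod.isUnit_iff_coprime 2 ℓ).mpr (Nat.coprime_two_left.mpr hodd)

lemma ZMod.two_mul_ne_zero_of_odd {ℓ : ℕ} (hodd : Odd ℓ) {x : ZMod ℓ} (hx : x ≠ 0) :
    2 * x ≠ 0 :=
  (ZMod.isUnit_two_of_odd hodd).mul_right_eq_zero.not.mpr hx

theorem stmt13_general (ℓ : ℕ) (hodd : Odd ℓ) (ν₁ ν₂ : ℂ)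
    (i₁ i₂ j₁ j₂ : ℤ)
    (hij : ¬((i₁ : ZMod ℓ) = (j₁ : ZMod ℓ) ∧ (i₂ : ZMod ℓ) = (j₂ : ZMod ℓ))) :
    ∃ s₁ s₂ t₁ t₂ : ℕ, s₁ < ℓ ∧ s₂ < ℓ ∧ t₁ < ℓ ∧ t₂ < ℓ ∧
      qexp ℓ (-4 * (ν₂ + s₂) * ((i₂ : ℂ) - j₂)
          - 2 * ((ν₂ + s₂) * ((i₁ : ℂ) - j₁) + (ν₁ + s₁) * ((i₂ : ℂ) - j₂)))
        ≠ qexp ℓ (-4 * (ν₂ + t₂) * ((i₂ : ℂ) - j₂)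
          - 2 * ((ν₂ + t₂) * ((i₁ : ℂ) - j₁) + (ν₁ + t₁) * ((i₂ : ℂ) - j₂))) := by
  have hℓ : 1 < ℓ := by
    by_contra! h
    obtain rfl : ℓ = 1 := by have := hodd.pos; omega
    exact hij ⟨Subsingleton.elim _ _, Subsingleton.elim _ _⟩
  by_cases h₂ : (i₂ : ZMod ℓ) = j₂
  · have h₁ : (i₁ : ZMod ℓ) - j₁ ≠ 0 := sub_ne_zero.mpr fun h₁ => hij ⟨h₁, h₂⟩
    refine ⟨0, 1, 0, 0, by omega, hℓ, by omega, by omega, ?_⟩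
    rw [Ne, qexp_eq_qexp_iff_of_sub_eq_intCast hodd.pos.ne'
      (m := -2 * (2 * (i₂ - j₂) + (i₁ - j₁))) (by push_cast; ring)]
    push_cast
    rw [h₂, sub_self, mul_zero, zero_add, neg_mul, neg_eq_zero]
    exact ZMod.two_mul_ne_zero_of_odd hodd h₁
  · refine ⟨1, 0, 0, 0, hℓ, by omega, by omega, by omega, ?_⟩
    rw [Ne, qexp_eq_qexp_iff_of_sub_eq_intCast hodd.pos.ne' (m := -2 * (i₂ - j₂))
      (by push_cast; ring)]
    push_cast
    rw [neg_mul, neg_eq_zero]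
    exact ZMod.two_mul_ne_zero_of_odd hodd (sub_ne_zero.mpr h₂)

theorem stmt13 (ℓ : ℕ) (h3 : 3 ≤ ℓ) (hodd : Odd ℓ) (ν₁ ν₂ : ℂ)
    (i₁ i₂ j₁ j₂ : ℤ)
    (hi₁ : 0 ≤ i₁ ∧ i₁ ≤ (ℓ : ℤ) - 1) (hi₂ : 0 ≤ i₂ ∧ i₂ ≤ (ℓ : ℤ) - 1)
    (hj₁ : 0 ≤ j₁ ∧ j₁ ≤ (ℓ : ℤ) - 1) (hj₂ : 0 ≤ j₂ ∧ j₂ ≤ (ℓ : ℤ) - 1)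
    (hij : ¬((i₁ : ZMod ℓ) = (j₁ : ZMod ℓ) ∧ (i₂ : ZMod ℓ) = (j₂ : ZMod ℓ))) :
    ∃ s₁ s₂ t₁ t₂ : ℕ, s₁ < ℓ ∧ s₂ < ℓ ∧ t₁ < ℓ ∧ t₂ < ℓ ∧
      qexp ℓ (-4 * (ν₂ + s₂) * ((i₂ : ℂ) - j₂)
          - 2 * ((ν₂ + s₂) * ((i₁ : ℂ) - j₁) + (ν₁ + s₁) * ((i₂ : ℂ) - j₂)))
        ≠ qexp ℓ (-4 * (ν₂ + t₂) * ((i₂ : ℂ) - j₂)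
          - 2 * ((ν₂ + t₂) * ((i₁ : ℂ) - j₁) + (ν₁ + t₁) * ((i₂ : ℂ) - j₂))) :=
  stmt13_general ℓ hodd ν₁ ν₂ i₁ i₂ j₁ j₂ hij
end

section
/- Let ℓ ≥ 3 be odd, ξ = exp(2πi/ℓ). In the module V_{μ₁,μ₂} with the actions given, the operators by which e₂ and f₂ act satisfy E₂² = 0 and F₂² = 0, and E₂F₂ + F₂E₂ = (K₂ − K₂^{-1})/(ξ − ξ^{-1}) where K₂ w_{ρ,σ,p} = ξ^{μ₂+σ+p} w_{ρ,σ,p}. -/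
/-- balanced quantum number `[x] = (ξ^x − ξ^{−x})/(ξ − ξ^{−1})` -/
noncomputable def bq (ℓ : ℕ) (x : ℂ) : ℂ :=
  (qexp ℓ x - qexp ℓ (-x)) / (qexp ℓ 1 - qexp ℓ (-1))

/-- valid basis indices `(ρ,σ,p)` of the module `V_{μ₁,μ₂}` -/
def valid (ℓ : ℕ) (ρ σ p : ℤ) : Prop :=
  (ρ = 0 ∨ ρ = 1) ∧ (σ = 0 ∨ σ = 1) ∧ 0 ≤ p ∧ p ≤ (ℓ : ℤ) - 1

/-- the basis vector `w_{ρ,σ,p}`, with the convention that out-of-range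
indices give the zero vector -/
noncomputable def w (ℓ : ℕ) (ρ σ p : ℤ) : (ℤ × ℤ × ℤ) →₀ ℂ :=
  open Classical in
  if valid ℓ ρ σ p then Finsupp.single (ρ, σ, p) 1 else 0

theorem stmt16 (ℓ : ℕ) (h3 : 3 ≤ ℓ) (hodd : Odd ℓ) (μ₂ : ℂ)
    (F₂ E₂ : ((ℤ × ℤ × ℤ) →₀ ℂ) →ₗ[ℂ] ((ℤ × ℤ × ℤ) →₀ ℂ))
    (hF₂ : ∀ ρ σ p : ℤ, valid ℓ ρ σ p →
      F₂ (w ℓ ρ σ p) = (1 - (ρ : ℂ)) • w ℓ (ρ + 1) σ p)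
    (hE₂ : ∀ ρ σ p : ℤ, valid ℓ ρ σ p →
      E₂ (w ℓ ρ σ p)
        = ((ρ : ℂ) * bq ℓ (μ₂ + p + σ)) • w ℓ (ρ - 1) σ p
          + ((σ : ℂ) * (-1 : ℂ) ^ ρ * qexp ℓ (-μ₂) * qexp ℓ (-(p : ℂ))) •
              w ℓ ρ (σ - 1) (p + 1)) :
    ∀ ρ σ p : ℤ, valid ℓ ρ σ p →
      E₂ (E₂ (w ℓ ρ σ p)) = 0 ∧ F₂ (F₂ (w ℓ ρ σ p)) = 0 ∧
      E₂ (F₂ (w ℓ ρ σ p)) + F₂ (E₂ (w ℓ ρ σ p))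
        = ((qexp ℓ (μ₂ + σ + p) - qexp ℓ (-(μ₂ + σ + p)))
            / (qexp ℓ 1 - qexp ℓ (-1))) • w ℓ ρ σ p := by
  intro ρ σ p hv
  obtain ⟨hρ, hσ, hp0, hpl⟩ := hv
  have wz : ∀ ρ' σ' p' : ℤ, ¬ valid ℓ ρ' σ' p' → w ℓ ρ' σ' p' = 0 := by
    intro ρ' σ' p' h; simp [w, h]
  have hF' : ∀ ρ' σ' p' : ℤ, (ρ' = 0 ∨ ρ' = 1) → (σ' = 0 ∨ σ' = 1) → 0 ≤ p' →
      F₂ (w ℓ ρ' σ' p') = (1 - (ρ' : ℂ)) • w ℓ (ρ' + 1) σ' p' := by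
    intro ρ' σ' p' h1 h2 h3'
    by_cases hle : p' ≤ (ℓ : ℤ) - 1
    · exact hF₂ ρ' σ' p' ⟨h1, h2, h3', hle⟩
    · have z1 : w ℓ ρ' σ' p' = 0 := wz _ _ _ (by rintro ⟨_, _, _, h⟩; exact hle h)
      have z2 : w ℓ (ρ' + 1) σ' p' = 0 := wz _ _ _ (by rintro ⟨_, _, _, h⟩; exact hle h)
      simp [z1, z2]
  have hE' : ∀ ρ' σ' p' : ℤ, (ρ' = 0 ∨ ρ' = 1) → (σ' = 0 ∨ σ' = 1) → 0 ≤ p' →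
      E₂ (w ℓ ρ' σ' p')
        = ((ρ' : ℂ) * bq ℓ (μ₂ + p' + σ')) • w ℓ (ρ' - 1) σ' p'
          + ((σ' : ℂ) * (-1 : ℂ) ^ ρ' * qexp ℓ (-μ₂) * qexp ℓ (-(p' : ℂ))) •
              w ℓ ρ' (σ' - 1) (p' + 1) := by
    intro ρ' σ' p' h1 h2 h3'
    by_cases hle : p' ≤ (ℓ : ℤ) - 1
    · exact hE₂ ρ' σ' p' ⟨h1, h2, h3', hle⟩
    · have z1 : w ℓ ρ' σ' p' = 0 := wz _ _ _ (by rintro ⟨_, _, _, h⟩; exact hle h)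
      have z2 : w ℓ (ρ' - 1) σ' p' = 0 := wz _ _ _ (by rintro ⟨_, _, _, h⟩; exact hle h)
      have z3 : w ℓ ρ' (σ' - 1) (p' + 1) = 0 := wz _ _ _ (by rintro ⟨_, _, _, h⟩; omega)
      simp [z1, z2, z3]
  rcases hρ with hρ | hρ <;> rcases hσ with hσ | hσ <;> subst hρ <;> subst hσ
  all_goals have hp1 : (0:ℤ) ≤ p + 1 := by omega
  · -- ρ = 0, σ = 0
    refine ⟨?_, ?_, ?_⟩ <;> (simp [hE', hF', hp0, hp1, bq, smul_smul]; try match_scalars <;> ring_nf)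
  · -- ρ = 0, σ = 1
    refine ⟨?_, ?_, ?_⟩ <;> (simp [hE', hF', hp0, hp1, bq, smul_smul]; try match_scalars <;> ring_nf)
  · -- ρ = 1, σ = 0
    refine ⟨?_, ?_, ?_⟩ <;> (simp [hE', hF', hp0, hp1, bq, smul_smul]; try match_scalars <;> ring_nf)
  · -- ρ = 1, σ = 1
    refine ⟨?_, ?_, ?_⟩ <;> (simp [hE', hF', hp0, hp1, bq, smul_smul]; try match_scalars <;> ring_nf)
end
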